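/- arXiv:1710.10836 — 2 statements merged into one kernel-verified Lean document; each statement's English description precedes it below -/
import Mathlib

section
/- Suppose every cycle of a finite weighted directed graph G contains the edge e = (u,v). Let P be a maxflow path from v to u in G − e, and let C = P ∪ {e}. Then for every cycle C' of G, γ(C') ≤ max(γ(C), Value(e)); in particular if Value(e) ≥ M(P), the cycle C maximizes γ among all cycles of G. -/
/-!
Every cycle `C'` passes through `e`, so `γ(C') ≤ w e`. Cutting `C'` open at `e` and stopping at the
next occurrence of `e` leaves a `v`–`u` walk in `G − e` using only edges of `C'`; it is nonempty
because `P` is not a cycle (it avoids `e`), so `u ≠ v`. Hence `γ(C') ≤ γ(P)` by maximality of `P`,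
and `γ(P) = γ(C)` as soon as `w e ≥ M(P)`.
-/

/-- A directed multigraph: edges `E` with source and target vertices in `V`. -/
structure MultiDigraph (V : Type) (E : Type) where
  src : E → V
  tgt : E → V

namespace MultiDigraph

variable {V E : Type}

/-- `G.IsWalk v u l` : the list of edges `l` forms a directed walk from `v` to `u`. -/
def IsWalk (G : MultiDigraph V E) : V → V → List E → Prop
  | v, u, [] => v = u
  | v, u, e :: l => G.src e = v ∧ G.IsWalk (G.tgt e) u l

/-- A (directed) cycle: a nonempty closed walk. -/
def IsCycle (G : MultiDigraph V E) (l : List E) : Prop :=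
  l ≠ [] ∧ ∃ x, G.IsWalk x x l

/-- minimum edge weight (critical edge value γ) along a nonempty list of edges. -/
noncomputable def minW (w : E → ℝ) (l : List E) : ℝ := ((l.map w).min?).getD 0

/-- maximum edge weight M along a nonempty list of edges. -/
noncomputable def maxW (w : E → ℝ) (l : List E) : ℝ := ((l.map w).max?).getD 0

/-- flow value φ = M − γ. -/
noncomputable def flowVal (w : E → ℝ) (l : List E) : ℝ := maxW w l - minW w l

end MultiDigraph

namespace MultiDigraph

variable {V E : Type}

section Weights

variable (w : E → ℝ) {l l' : List E}

theorem le_minW_iff (hl : l ≠ []) {a : ℝ} : a ≤ minW w l ↔ ∀ f ∈ l, a ≤ w f := by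
  obtain ⟨m, hm⟩ : ∃ m, (l.map w).min? = some m :=
    Option.ne_none_iff_exists'.1 (mt List.min?_eq_none_iff.1 (by simpa using hl))
  simp [minW, hm, List.le_min?_iff hm]

theorem maxW_le_iff (hl : l ≠ []) {a : ℝ} : maxW w l ≤ a ↔ ∀ f ∈ l, w f ≤ a := by
  obtain ⟨m, hm⟩ : ∃ m, (l.map w).max? = some m :=
    Option.ne_none_iff_exists'.1 (mt List.max?_eq_none_iff.1 (by simpa using hl))
  simp [maxW, hm, List.max?_le_iff hm]

variable {w}

theorem minW_le_of_mem {f : E} (hf : f ∈ l) : minW w l ≤ w f :=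
  (le_minW_iff w (List.ne_nil_of_mem hf)).1 le_rfl f hf

theorem le_maxW_of_mem {f : E} (hf : f ∈ l) : w f ≤ maxW w l :=
  (maxW_le_iff w (List.ne_nil_of_mem hf)).1 le_rfl f hf

theorem minW_le_maxW (hl : l ≠ []) : minW w l ≤ maxW w l := by
  obtain ⟨f, hf⟩ := List.exists_mem_of_ne_nil l hl
  exact (minW_le_of_mem hf).trans (le_maxW_of_mem hf)

theorem minW_le_minW_of_subset (hl' : l' ≠ []) (h : l' ⊆ l) : minW w l ≤ minW w l' :=
  (le_minW_iff w hl').2 fun _ hf => minW_le_of_mem (h hf)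

end Weights

variable {G : MultiDigraph V E}

theorem IsWalk.append {a b c : V} : ∀ {l l' : List E},
    G.IsWalk a b l → G.IsWalk b c l' → G.IsWalk a c (l ++ l')
  | [], _, h, h' => h ▸ h'
  | _ :: _, _, ⟨hsrc, h⟩, h' => ⟨hsrc, h.append h'⟩

theorem IsWalk.exists_eq_append_cons_of_mem {e : E} : ∀ {a b : V} {l : List E},
    G.IsWalk a b l → e ∈ l → ∃ l₁ l₂, l = l₁ ++ e :: l₂ ∧ e ∉ l₁ ∧
      G.IsWalk a (G.src e) l₁ ∧ G.IsWalk (G.tgt e) b l₂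
  | _, _, f :: l, ⟨hsrc, h⟩, he => by
    by_cases hfe : f = e
    · subst hfe
      exact ⟨[], l, rfl, List.not_mem_nil, hsrc.symm, h⟩
    · obtain ⟨l₁, l₂, rfl, hel₁, h₁, h₂⟩ :=
        h.exists_eq_append_cons_of_mem ((List.mem_cons.1 he).resolve_left (Ne.symm hfe))
      exact ⟨f :: l₁, l₂, rfl, by simp [Ne.symm hfe, hel₁], ⟨hsrc, h₁⟩, h₂⟩

theorem IsWalk.exists_subset_not_mem {e : E} {a : V} {l : List E}
    (h : G.IsWalk a (G.src e) l) : ∃ Q, G.IsWalk a (G.src e) Q ∧ e ∉ Q ∧ Q ⊆ l := by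
  by_cases he : e ∈ l
  · obtain ⟨l₁, l₂, rfl, hel₁, h₁, -⟩ := h.exists_eq_append_cons_of_mem he
    exact ⟨l₁, h₁, hel₁, List.subset_append_left _ _⟩
  · exact ⟨l, h, he, List.Subset.refl l⟩

theorem IsWalk.exists_walk_tgt_src_not_mem {e : E} {x : V} {l : List E} (h : G.IsWalk x x l)
    (he : e ∈ l) : ∃ Q, G.IsWalk (G.tgt e) (G.src e) Q ∧ e ∉ Q ∧ Q ⊆ l := by
  obtain ⟨l₁, l₂, rfl, -, h₁, h₂⟩ := h.exists_eq_append_cons_of_mem he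
  obtain ⟨Q, hQ, heQ, hQl⟩ := (h₂.append h₁).exists_subset_not_mem
  refine ⟨Q, hQ, heQ, fun f hf => ?_⟩
  rcases List.mem_append.1 (hQl hf) with hf | hf <;> simp [hf]

end MultiDigraph

open MultiDigraph in
/-- Every cycle of G contains e = (u,v). If P is a maxflow path from v to u in
G − e and C = P ∪ {e}, then every cycle C' satisfies γ(C') ≤ max(γ(C), w e);
in particular if w e ≥ M(P) then C maximizes γ among all cycles of G. -/
theorem stmt_7 {V E : Type} (G : MultiDigraph V E) (w : E → ℝ) (e : E) (u v : V)
    (hsrc : G.src e = u) (htgt : G.tgt e = v)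
    (hall : ∀ l, G.IsCycle l → e ∈ l)
    (P : List E) (hP : G.IsWalk v u P) (hPne : P ≠ []) (heP : e ∉ P)
    (hmaxflow : ∀ Q, G.IsWalk v u Q → Q ≠ [] → e ∉ Q → minW w Q ≤ minW w P) :
    (∀ C', G.IsCycle C' → minW w C' ≤ max (minW w (P ++ [e])) (w e)) ∧
    (maxW w P ≤ w e → ∀ C', G.IsCycle C' → minW w C' ≤ minW w (P ++ [e])) := by
  have huv : u ≠ v := by
    rintro rfl
    exact heP (hall P ⟨hPne, u, hP⟩)
  have hcycle : ∀ C', G.IsCycle C' → minW w C' ≤ w e ∧ minW w C' ≤ minW w P := by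
    rintro C' ⟨hC'ne, x, hC'⟩
    have heC' := hall C' ⟨hC'ne, x, hC'⟩
    obtain ⟨Q, hQ, heQ, hQC'⟩ := hC'.exists_walk_tgt_src_not_mem heC'
    rw [hsrc, htgt] at hQ
    have hQne : Q ≠ [] := by
      rintro rfl
      exact huv hQ.symm
    exact ⟨minW_le_of_mem heC',
      (minW_le_minW_of_subset hQne hQC').trans (hmaxflow Q hQ hQne heQ)⟩
  refine ⟨fun C' hC' => (hcycle C' hC').1.trans (le_max_right _ _), fun hPe C' hC' => ?_⟩
  refine (hcycle C' hC').2.trans ((le_minW_iff w (by simp)).2 fun f hf => ?_)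
  rcases List.mem_append.1 hf with hf | hf
  · exact minW_le_of_mem hf
  · rw [List.mem_singleton.1 hf]
    exact (minW_le_maxW hPne).trans hPe
end

section
/- In the widest-path (max-min) variant of Dijkstra's algorithm with source v, after all vertices are extracted from the priority queue, for every vertex m reachable from v, dist[m] equals the maximum over all v-m paths of the minimum edge weight along the path (with dist[v] = +∞). -/
/-!
The dist table never exceeds the widest-path value, because `widest w v` dominates the initial
table and is closed under relaxation: `min (widest x) (w x y) ≤ widest y`.

Conversely, by strong induction on the extraction index `i`, every path from `v` to the `i`-th
extracted vertex `L[i]` has bottleneck at most `dist[L[i]]` at the moment of extraction. If `v`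
is not yet extracted, the greedy choice forces `dist[L[i]] = ⊤`. Otherwise the path has a first
edge `a → b` leaving the set of already extracted vertices; `a` was extracted at some step
`j < i`, so by induction its dist bounds the bottleneck of the prefix, relaxing `a` lifted
`dist[b]` above the bottleneck of the path, and the greedy choice at step `i` gives
`dist[b] ≤ dist[L[i]]`.
-/

noncomputable section

/-- One extraction step of widest-path Dijkstra: after extracting `ver`,
every vertex `n` is relaxed via `dist[n] := max (dist n) (min (dist ver) (w ver n))`,
where `w x y` is the largest weight among parallel edges from `x` to `y`
(`⊥` if there is no such edge). -/
def relaxAll {V : Type} (w : V → V → EReal) (d : V → EReal) (ver : V) : V → EReal :=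
  fun n => max (d n) (min (d ver) (w ver n))

/-- Minimum edge weight along the path `x :: l` of vertices (`⊤` for the empty path). -/
def pathMin {V : Type} (w : V → V → EReal) : V → List V → EReal
  | _, [] => ⊤
  | x, y :: l => min (w x y) (pathMin w y l)

/-- Last vertex of the path `v :: l`. -/
def endV {V : Type} (v : V) (l : List V) : V := (v :: l).getLast (List.cons_ne_nil _ _)

/-- Widest-path distance: the maximum (supremum) over all v-m paths of the
minimum edge weight along the path (equals `⊤` for `m = v`). -/
def widest {V : Type} (w : V → V → EReal) (v m : V) : EReal :=
  ⨆ (l : List V) (_ : endV v l = m), pathMin w v l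

/-- `dists w d0 L i` : the dist table after the first `i` extractions,
where `L` is the order in which vertices are extracted. -/
def dists {V : Type} (w : V → V → EReal) (d0 : V → EReal) (L : List V) (i : ℕ) : V → EReal :=
  (L.take i).foldl (relaxAll w) d0

/-- The priority-queue (greedy) property of a run: the `i`-th extracted vertex has
maximal current dist value among all still-unextracted vertices. -/
def GreedyRun {V : Type} (w : V → V → EReal) (d0 : V → EReal) (L : List V) : Prop :=
  ∀ i j : Fin L.length, i ≤ j →
    dists w d0 L i (L.get j) ≤ dists w d0 L i (L.get i)

section Paths

variable {V : Type} (w : V → V → EReal)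

theorem endV_cons (x y : V) (l : List V) : endV x (y :: l) = endV y l := by
  simp [endV, List.getLast_cons]

theorem endV_append (x : V) (p q : List V) : endV x (p ++ q) = endV (endV x p) q := by
  induction p generalizing x with
  | nil => rfl
  | cons y p ih => simp only [List.cons_append, endV_cons, ih]

theorem pathMin_append (x : V) (p q : List V) :
    pathMin w x (p ++ q) = min (pathMin w x p) (pathMin w (endV x p) q) := by
  induction p generalizing x with
  | nil => simp [pathMin, endV]
  | cons y p ih => simp only [List.cons_append, pathMin, ih, endV_cons, min_assoc]

theorem pathMin_append_singleton (x b : V) (p : List V) :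
    pathMin w x (p ++ [b]) = min (pathMin w x p) (w (endV x p) b) := by
  simp [pathMin_append, pathMin]

theorem pathMin_append_cons_le (x b : V) (p q : List V) :
    pathMin w x (p ++ b :: q) ≤ min (pathMin w x p) (w (endV x p) b) := by
  rw [pathMin_append]
  exact min_le_min_left _ (min_le_left _ _)

theorem exists_crossing {P : V → Prop} (x : V) (l : List V) (hx : P x) (hend : ¬P (endV x l)) :
    ∃ p b q, l = p ++ b :: q ∧ P (endV x p) ∧ ¬P b := by
  induction l generalizing x with
  | nil => exact absurd hx hend
  | cons y l ih =>
    by_cases hy : P y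
    · obtain ⟨p, b, q, rfl, hp, hb⟩ := ih y hy (by rwa [endV_cons] at hend)
      exact ⟨y :: p, b, q, rfl, by rwa [endV_cons], hb⟩
    · exact ⟨[], y, l, rfl, hx, hy⟩

end Paths

section Widest

variable {V : Type} (w : V → V → EReal) (v : V)

theorem le_widest (l : List V) : pathMin w v l ≤ widest w v (endV v l) :=
  le_iSup₂_of_le l rfl le_rfl

theorem widest_self : widest w v v = ⊤ :=
  top_le_iff.mp (le_widest w v [])

theorem min_widest_le_widest (x y : V) : min (widest w v x) (w x y) ≤ widest w v y := by
  rw [widest, iSup₂_inf_eq]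
  refine iSup₂_le fun l hl => ?_
  subst hl
  simpa [pathMin_append_singleton, endV_append, endV] using le_widest w v (l ++ [y])

variable {w v}

theorem relaxAll_le_widest {d : V → EReal} (hd : d ≤ widest w v) (x : V) :
    relaxAll w d x ≤ widest w v := fun n =>
  max_le (hd n) ((min_le_min_right _ (hd x)).trans (min_widest_le_widest w v x n))

theorem foldl_relaxAll_le_widest (L : List V) {d : V → EReal} (hd : d ≤ widest w v) :
    L.foldl (relaxAll w) d ≤ widest w v := by
  induction L generalizing d with
  | nil => exact hd
  | cons x L ih => exact ih (relaxAll_le_widest hd x)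

end Widest

section Run

variable {V : Type} (w : V → V → EReal) (d0 : V → EReal) (L : List V)

theorem le_relaxAll (d : V → EReal) (x : V) : d ≤ relaxAll w d x := fun _ =>
  le_max_left _ _

theorem le_foldl_relaxAll (l : List V) (d : V → EReal) : d ≤ l.foldl (relaxAll w) d := by
  induction l generalizing d with
  | nil => exact le_rfl
  | cons x l ih => exact (le_relaxAll w d x).trans (ih _)

theorem dists_mono : Monotone (dists w d0 L) := by
  intro i j hij
  rw [dists, dists, ← List.take_append_drop i (L.take j), List.take_take, min_eq_left hij,
    List.foldl_append]
  exact le_foldl_relaxAll w _ _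

theorem dists_succ {i : ℕ} (hi : i < L.length) :
    dists w d0 L (i + 1) = relaxAll w (dists w d0 L i) L[i] := by
  simp only [dists, List.take_add_one, List.getElem?_eq_getElem hi, Option.toList_some,
    List.foldl_append, List.foldl_cons, List.foldl_nil]

theorem dists_le_widest {v : V} (hd0 : d0 ≤ widest w v) (i : ℕ) : dists w d0 L i ≤ widest w v :=
  foldl_relaxAll_le_widest _ hd0

variable {w d0 L}

theorem GreedyRun.le_of_not_mem_take (hg : GreedyRun w d0 L) {i : ℕ} (hi : i < L.length)
    {x : V} (hxL : x ∈ L) (hx : x ∉ L.take i) : dists w d0 L i x ≤ dists w d0 L i L[i] := by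
  obtain ⟨j, hj, rfl⟩ := List.getElem_of_mem hxL
  have hij : i ≤ j := by
    by_contra! hji
    exact hx (List.mem_take_iff_getElem.mpr ⟨j, by omega, rfl⟩)
  exact hg ⟨i, hi⟩ ⟨j, hj⟩ hij

theorem pathMin_le_dists_getElem (hg : GreedyRun w d0 L) (hall : ∀ x, x ∈ L) {v : V}
    (hv : d0 v = ⊤) (i : ℕ) (hi : i < L.length) (l : List V) (hl : endV v l = L[i]) :
    pathMin w v l ≤ dists w d0 L i L[i] := by
  induction i using Nat.strong_induction_on generalizing l with
  | _ i ih =>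
  by_cases hsettled : L[i] ∈ L.take i
  · obtain ⟨j, hj, hLj⟩ := List.mem_take_iff_getElem.mp hsettled
    have hji : j < i := by omega
    calc pathMin w v l ≤ dists w d0 L j L[j] := ih j hji _ l (hl.trans hLj.symm)
      _ ≤ dists w d0 L i L[j] := dists_mono w d0 L hji.le _
      _ = dists w d0 L i L[i] := by rw [hLj]
  by_cases hv_settled : v ∈ L.take i
  · obtain ⟨p, b, q, rfl, hp, hb⟩ := exists_crossing v l hv_settled (hl ▸ hsettled)
    obtain ⟨j, hj, hLj⟩ := List.mem_take_iff_getElem.mp hp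
    have hji : j < i := by omega
    have hjL : j < L.length := by omega
    calc pathMin w v (p ++ b :: q) ≤ min (pathMin w v p) (w (endV v p) b) :=
          pathMin_append_cons_le w v b p q
      _ ≤ min (dists w d0 L j L[j]) (w L[j] b) := by
          rw [← hLj]
          exact min_le_min_right _ (ih j hji hjL p hLj.symm)
      _ ≤ dists w d0 L (j + 1) b := by
          rw [dists_succ w d0 L hjL]
          exact le_max_right _ _
      _ ≤ dists w d0 L i b := dists_mono w d0 L hji _
      _ ≤ dists w d0 L i L[i] := hg.le_of_not_mem_take hi (hall b) hb
  · calc pathMin w v l ≤ d0 v := hv ▸ le_top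
      _ ≤ dists w d0 L i v := dists_mono w d0 L (Nat.zero_le i) v
      _ ≤ dists w d0 L i L[i] := hg.le_of_not_mem_take hi (hall v) hv_settled

end Run

theorem stmt_9_general {V : Type} [DecidableEq V]
    (w : V → V → EReal) (v : V) (L : List V)
    (hall : ∀ x : V, x ∈ L)
    (d0 : V → EReal) (hd0 : d0 = fun x => if x = v then ⊤ else ⊥)
    (hgreedy : GreedyRun w d0 L) :
    ∀ m : V, (∃ l : List V, endV v l = m ∧ pathMin w v l ≠ ⊥) →
      dists w d0 L L.length m = widest w v m := by
  intro m _
  have hv : d0 v = ⊤ := by simp [hd0]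
  have hd0_le : d0 ≤ widest w v := by
    intro x
    rw [hd0]
    dsimp only
    split_ifs with hx
    · rw [hx, widest_self]
    · exact bot_le
  refine le_antisymm (dists_le_widest w d0 L hd0_le _ m) (iSup₂_le fun l hl => ?_)
  obtain ⟨i, hi, rfl⟩ := List.getElem_of_mem (hall m)
  exact (pathMin_le_dists_getElem hgreedy hall hv i hi l hl).trans
    (dists_mono w d0 L hi.le _)

/-- after all vertices are extracted, for every vertex `m` reachable
from the source `v`, `dist[m]` equals the maximum over all v-m paths of the
minimum edge weight along the path (with `dist[v] = +∞`). -/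
theorem stmt_9 {V : Type} [Fintype V] [DecidableEq V]
    (w : V → V → EReal) (v : V) (L : List V)
    (hnodup : L.Nodup) (hall : ∀ x : V, x ∈ L)
    (d0 : V → EReal) (hd0 : d0 = fun x => if x = v then ⊤ else ⊥)
    (hgreedy : GreedyRun w d0 L) :
    ∀ m : V, (∃ l : List V, endV v l = m ∧ pathMin w v l ≠ ⊥) →
      dists w d0 L L.length m = widest w v m :=
  stmt_9_general w v L hall d0 hd0 hgreedy
end
end
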